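/- arXiv:2110.04344 — 6 statements merged into one kernel-verified Lean document; each statement's English description precedes it below -/
import Mathlib

section
/- Let P ⊆ [0,1]^n be a polytope and t a positive integer with t ≤ n. Then iterating the t-branch split closure ⌈n/t⌉ times yields the integer hull of P: tSC^(⌈n/t⌉)(P) = conv(P ∩ {0,1}^n). -/
/-- The `t`-branch split closure of a set `P ⊆ ℝⁿ`. -/
def tBranchSplitClosure (t n : ℕ) (P : Set (Fin n → ℝ)) : Set (Fin n → ℝ) :=
  ⋂ (π : Fin t → Fin n → ℤ) (π₀ : Fin t → ℤ),
    convexHull ℝ (⋂ j : Fin t,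
      ({x ∈ P | ∑ i, (π j i : ℝ) * x i ≤ (π₀ j : ℝ)} ∪
       {x ∈ P | ((π₀ j : ℝ) + 1) ≤ ∑ i, (π j i : ℝ) * x i}))

/-!
Splitting on the `t` disjunctions `y i ≤ 0 ∨ 1 ≤ y i` for a block of `t` coordinates makes them
binary, and inside the unit cube the points that are binary on a set of coordinates form a face of
every convex hull, so one round of `t`-branch splits turns the hull of the points of `P` binary on
the first `k` coordinates into a subset of the hull of those binary on the first `k + t`. After
`⌈n / t⌉` rounds every coordinate is binary. Conversely a 0-1 point satisfies every split
disjunction, because `⟨π, x⟩` is then an integer, so it survives every round.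
-/

open Set

section ConcaveZeros

variable {𝕜 E ι : Type*} [Field 𝕜] [LinearOrder 𝕜] [IsStrictOrderedRing 𝕜]
  [AddCommGroup E] [Module 𝕜 E]

theorem mem_convexHull_common_zeros_of_concaveOn {S : Set E} {g : ι → E → 𝕜}
    (hg : ∀ i, ConcaveOn 𝕜 (convexHull 𝕜 S) (g i)) (hS : ∀ i, ∀ y ∈ S, 0 ≤ g i y)
    {x : E} (hx : x ∈ convexHull 𝕜 S) (hgx : ∀ i, g i x = 0) :
    x ∈ convexHull 𝕜 {y ∈ S | ∀ i, g i y = 0} := by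
  let C := convexHull 𝕜 {y ∈ S | ∀ i, g i y = 0}
  -- `T` is convex: concavity forces both ends of a segment through a common zero to be zeros.
  let T := {y ∈ convexHull 𝕜 S | (∀ i, 0 ≤ g i y) ∧ ((∀ i, g i y = 0) → y ∈ C)}
  have hST : S ⊆ T := fun y hy =>
    ⟨subset_convexHull 𝕜 S hy, fun i => hS i y hy, fun h => subset_convexHull 𝕜 _ ⟨hy, h⟩⟩
  have hT : Convex 𝕜 T := by
    rintro y ⟨hyS, hy0, hyC⟩ z ⟨hzS, hz0, hzC⟩ a b ha hb hab
    have hmem := convex_convexHull 𝕜 S hyS hzS ha hb hab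
    have hconc : ∀ i, a * g i y + b * g i z ≤ g i (a • y + b • z) := fun i =>
      (hg i).2 hyS hzS ha hb hab
    refine ⟨hmem, fun i => (hconc i).trans' (by have := hy0 i; have := hz0 i; positivity),
      fun hzero => ?_⟩
    rcases ha.eq_or_lt with rfl | ha'
    · obtain rfl : b = 1 := by linarith
      simpa using hzC fun i => by simpa using hzero i
    rcases hb.eq_or_lt with rfl | hb'
    · obtain rfl : a = 1 := by linarith
      simpa using hyC fun i => by simpa using hzero i
    have hyz : ∀ i, g i y = 0 ∧ g i z = 0 := fun i => by
      have := hconc i; have := hy0 i; have := hz0 i; rw [hzero i] at *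
      constructor <;> nlinarith
    exact convex_convexHull 𝕜 _ (hyC fun i => (hyz i).1) (hzC fun i => (hyz i).2) ha hb hab
  exact (convexHull_min hST hT hx).2.2 hgx

end ConcaveZeros

section BinaryCoordinates

variable {n : ℕ}

def binaryOn (B : Set (Fin n)) : Set (Fin n → ℝ) := {x | ∀ i ∈ B, x i = 0 ∨ x i = 1}

theorem binaryOn_union (B C : Set (Fin n)) : binaryOn (B ∪ C) = binaryOn B ∩ binaryOn C := by
  ext x
  simp [binaryOn, or_imp, forall_and]

theorem concaveOn_min_apply_one_sub_apply (i : Fin n) {s : Set (Fin n → ℝ)} (hs : Convex ℝ s) :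
    ConcaveOn ℝ s fun y => min (y i) (1 - y i) :=
  ((LinearMap.proj i).concaveOn hs).inf
    ((concaveOn_const 1 hs).sub ((LinearMap.proj i).convexOn hs))

theorem mem_convexHull_inter_binaryOn {S : Set (Fin n → ℝ)} (hS : S ⊆ Icc 0 1) {B : Set (Fin n)}
    {x : Fin n → ℝ} (hx : x ∈ convexHull ℝ S) (hxB : x ∈ binaryOn B) :
    x ∈ convexHull ℝ (S ∩ binaryOn B) := by
  -- `y ↦ min (y i) (1 - y i)` is concave, nonnegative on the cube and zero exactly at binary `y i`.
  have hface := mem_convexHull_common_zeros_of_concaveOn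
    (g := fun (i : B) y => min (y i) (1 - y i))
    (fun i => concaveOn_min_apply_one_sub_apply i (convex_convexHull ℝ S))
    (fun i y hy => le_min ((hS hy).1 i) (sub_nonneg.2 ((hS hy).2 i))) hx
    (fun i => by rcases hxB i i.2 with h | h <;> simp [h])
  refine convexHull_mono ?_ hface
  rintro y ⟨hyS, hy⟩
  refine ⟨hyS, fun i hi => ?_⟩
  rcases min_eq_iff.1 (hy ⟨i, hi⟩) with ⟨h, -⟩ | ⟨h, -⟩
  · exact Or.inl h
  · exact Or.inr (by linarith)

end BinaryCoordinates

section SplitClosure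

variable {t n : ℕ}

theorem tBranchSplitClosure_mono : Monotone (tBranchSplitClosure t n) := fun _ _ h =>
  iInter₂_mono fun _ _ => convexHull_mono <| iInter_mono fun _ =>
    union_subset_union (fun _ hx => ⟨h hx.1, hx.2⟩) (fun _ hx => ⟨h hx.1, hx.2⟩)

theorem convex_tBranchSplitClosure (P : Set (Fin n → ℝ)) :
    Convex ℝ (tBranchSplitClosure t n P) :=
  convex_iInter fun _ => convex_iInter fun _ => convex_convexHull ℝ _

theorem mem_tBranchSplitClosure_of_integral {P : Set (Fin n → ℝ)} {x : Fin n → ℝ} (hx : x ∈ P)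
    (hint : ∀ i, ∃ z : ℤ, x i = z) : x ∈ tBranchSplitClosure t n P := by
  choose z hz using hint
  refine mem_iInter₂.2 fun π π₀ => subset_convexHull ℝ _ (mem_iInter.2 fun j => ?_)
  have hsum : ∑ i, (π j i : ℝ) * x i = ((∑ i, π j i * z i : ℤ) : ℝ) := by
    push_cast
    simp only [hz]
  rcases le_or_gt (∑ i, π j i * z i) (π₀ j) with hle | hlt
  · exact Or.inl ⟨hx, by rw [hsum]; exact_mod_cast hle⟩
  · exact Or.inr ⟨hx, by rw [hsum]; exact_mod_cast hlt⟩

theorem convexHull_binary_subset_iterate_tBranchSplitClosure {P : Set (Fin n → ℝ)}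
    (hP : Convex ℝ P) (k : ℕ) :
    convexHull ℝ (P ∩ {x | ∀ i, x i = 0 ∨ x i = 1}) ⊆ (tBranchSplitClosure t n)^[k] P := by
  induction k with
  | zero => exact convexHull_min inter_subset_left hP
  | succ k ih =>
    rw [Function.iterate_succ_apply']
    refine convexHull_min (fun y hy => mem_tBranchSplitClosure_of_integral
      (ih (subset_convexHull ℝ _ hy)) fun i => ?_) (convex_tBranchSplitClosure _)
    rcases hy.2 i with h | h
    · exact ⟨0, by simp [h]⟩
    · exact ⟨1, by simp [h]⟩

theorem tBranchSplitClosure_subset_convexHull_binaryOn_Ico (ht : 0 < t) {Q : Set (Fin n → ℝ)}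
    (hQ : Q ⊆ Icc 0 1) (k : ℕ) :
    tBranchSplitClosure t n Q ⊆ convexHull ℝ (Q ∩ binaryOn {i | k ≤ i ∧ i < k + t}) := by
  intro x hx
  -- Split `j` is `y (k + j) ≤ 0 ∨ 1 ≤ y (k + j)`, and the trivial `0 ≤ 0 ∨ 1 ≤ 0` once `n ≤ k + j`.
  let π : Fin t → Fin n → ℤ := fun j i => if (i : ℕ) = k + j then 1 else 0
  refine convexHull_mono ?_ (mem_iInter₂.1 hx π 0)
  intro y hy
  rw [mem_iInter] at hy
  refine ⟨(hy ⟨0, ht⟩).elim And.left And.left, fun i ⟨hki, hik⟩ => ?_⟩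
  let j : Fin t := ⟨i - k, by omega⟩
  have hj : ∀ l : Fin n, (l : ℕ) = k + j ↔ l = i := fun l => by simp only [j, Fin.ext_iff]; omega
  have hsum : ∑ l, (π j l : ℝ) * y l = y i := by
    simp [π, hj]
  rcases hy j with ⟨hyQ, hle⟩ | ⟨hyQ, hge⟩
  · exact Or.inl (le_antisymm (by simpa [hsum] using hle) ((hQ hyQ).1 i))
  · exact Or.inr (le_antisymm ((hQ hyQ).2 i) (by simpa [hsum] using hge))

end SplitClosure

section Iteration

variable {t n : ℕ} {P : Set (Fin n → ℝ)}

theorem tBranchSplitClosure_convexHull_binaryOn_lt_subset (ht : 0 < t) (hP : P ⊆ Icc 0 1)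
    (k : ℕ) :
    tBranchSplitClosure t n (convexHull ℝ (P ∩ binaryOn {i | i < k})) ⊆
      convexHull ℝ (P ∩ binaryOn {i | i < k + t}) := by
  have hQ : convexHull ℝ (P ∩ binaryOn {i | i < k}) ⊆ Icc 0 1 :=
    convexHull_min (inter_subset_left.trans hP) (convex_Icc 0 1)
  have hlt : {i : Fin n | i < k} ∪ {i | k ≤ i ∧ i < k + t} = {i : Fin n | i < k + t} := by
    ext i
    simp only [mem_union, mem_ofPred_eq]
    omega
  refine (tBranchSplitClosure_subset_convexHull_binaryOn_Ico ht hQ k).trans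
    (convexHull_min ?_ (convex_convexHull ℝ _))
  rintro y ⟨hyQ, hyB⟩
  rw [← hlt, binaryOn_union, ← inter_assoc]
  exact mem_convexHull_inter_binaryOn (inter_subset_left.trans hP) hyQ hyB

theorem iterate_tBranchSplitClosure_subset (ht : 0 < t) (hP : P ⊆ Icc 0 1) (m : ℕ) :
    (tBranchSplitClosure t n)^[m] P ⊆ convexHull ℝ (P ∩ binaryOn {i | i < m * t}) := by
  induction m with
  | zero => exact fun x hx => subset_convexHull ℝ _ ⟨hx, fun i hi => absurd hi (by simp)⟩
  | succ m ih =>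
    rw [Function.iterate_succ_apply', Nat.succ_mul]
    exact (tBranchSplitClosure_mono ih).trans
      (tBranchSplitClosure_convexHull_binaryOn_lt_subset ht hP _)

end Iteration

theorem le_ceil_div_toNat_mul {n t : ℕ} (ht : 0 < t) : n ≤ ⌈(n : ℚ) / t⌉.toNat * t := by
  have h := Nat.le_ceil ((n : ℚ) / t)
  rw [div_le_iff₀ (by exact_mod_cast ht)] at h
  rw [Int.ceil_toNat]
  exact_mod_cast h

theorem stmt_7_general (t n : ℕ) (ht : 0 < t) (P : Set (Fin n → ℝ))
    (hconv : Convex ℝ P)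
    (hcube : P ⊆ Set.Icc (fun _ => (0 : ℝ)) (fun _ => (1 : ℝ))) :
    (tBranchSplitClosure t n)^[⌈(n : ℚ) / t⌉.toNat] P =
      convexHull ℝ (P ∩ {x | ∀ i, x i = 0 ∨ x i = 1}) := by
  refine subset_antisymm ?_ (convexHull_binary_subset_iterate_tBranchSplitClosure hconv _)
  refine (iterate_tBranchSplitClosure_subset ht hcube _).trans (convexHull_mono ?_)
  rintro x ⟨hxP, hx⟩
  exact ⟨hxP, fun i => hx i (i.isLt.trans_le (le_ceil_div_toNat_mul ht))⟩

theorem stmt_7 (t n : ℕ) (ht : 0 < t) (htn : t ≤ n) (P : Set (Fin n → ℝ))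
    (hconv : Convex ℝ P) (hcompact : IsCompact P)
    (hcube : P ⊆ Set.Icc (fun _ => (0 : ℝ)) (fun _ => (1 : ℝ))) :
    (tBranchSplitClosure t n)^[⌈(n : ℚ) / t⌉.toNat] P =
      convexHull ℝ (P ∩ {x | ∀ i, x i = 0 ∨ x i = 1}) :=
  stmt_7_general t n ht P hconv hcube
end

section
/- Let t ≥ 1, let x ∈ {0, 1/2, 1}^n with at least t fractional coordinates, and let π¹,…,π^t ∈ ℤ^n. Then there exists a subset J of the fractional coordinates of x with |J| ≤ t such that ⟨π^i, x^(J,0)⟩ ∈ ℤ and ⟨π^i, x^(J,1)⟩ ∈ ℤ for all i = 1,…,t. -/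
/-!
Let `E` be the set of half-integral coordinates and read the columns `(π^i_k)_i`, `k ∈ E`, as
vectors in `𝔽₂^t`. A minimal `J ⊆ E` such that the columns indexed by `E \ J` sum to zero is
linearly independent, so `|J| ≤ t`. Rounding the coordinates in `J` to an integer leaves `E \ J`
as the only half-integral coordinates, so `⟨π^i, x^(J,c)⟩` is an integer plus
`(∑_{k ∈ E \ J} π^i_k) / 2`, and that sum is even.
-/

open Finset

theorem ZMod.sum_smul_eq_sum_filter_ne_zero {ι V : Type*} [AddCommGroup V] [Module (ZMod 2) V]
    (s : Finset ι) (f : ι → ZMod 2) (v : ι → V) :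
    ∑ i ∈ s, f i • v i = ∑ i ∈ s with f i ≠ 0, v i := by
  rw [sum_filter]
  refine sum_congr rfl fun i _ => ?_
  rcases (by decide : ∀ a : ZMod 2, a = 0 ∨ a = 1) (f i) with h | h <;> simp [h]

theorem exists_linearIndepOn_subset_sum_sdiff_eq_zero {ι V : Type*} [DecidableEq ι]
    [AddCommGroup V] [Module (ZMod 2) V] (v : ι → V) (E : Finset ι) :
    ∃ J ⊆ E, LinearIndepOn (ZMod 2) v (J : Set ι) ∧ ∑ k ∈ E \ J, v k = 0 := by
  classical
  obtain ⟨J, hJ, hmin⟩ := exists_min_image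
    {J ∈ E.powerset | ∑ k ∈ E \ J, v k = 0} card ⟨E, by simp⟩
  rw [mem_filter, mem_powerset] at hJ
  obtain ⟨hJE, hsum⟩ := hJ
  refine ⟨J, hJE, ?_, hsum⟩
  by_contra hdep
  obtain ⟨f, hf, j, hjJ, hj⟩ := not_linearIndepOn_finset_iff.mp hdep
  -- the support of a dependency is a nonempty subset of `J` with zero sum, removable from `J`
  set K := {i ∈ J | f i ≠ 0}
  have hKJ : K ⊆ J := filter_subset _ _
  have hK : ∑ k ∈ K, v k = 0 := by rw [← ZMod.sum_smul_eq_sum_filter_ne_zero, hf]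
  have hsmaller : ∑ k ∈ E \ (J \ K), v k = 0 := by
    rw [sum_sdiff_eq_sub (sdiff_subset.trans hJE), sum_sdiff_eq_sub hKJ, hK, sub_zero,
      ← sum_sdiff_eq_sub hJE, hsum]
  have hlt : (J \ K).card < J.card :=
    card_lt_card (sdiff_ssubset hKJ ⟨j, mem_filter.mpr ⟨hjJ, hj⟩⟩)
  exact hlt.not_ge
    (hmin _ (mem_filter.mpr ⟨mem_powerset.mpr (sdiff_subset.trans hJE), hsmaller⟩))

theorem exists_int_sum_mul_eq_of_even {ι K : Type*} [Fintype ι] [Field K] [CharZero K]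
    (p : ι → ℤ) (z : ι → K) (F : Finset ι) (hhalf : ∀ k ∈ F, z k = 1 / 2)
    (hint : ∀ k ∉ F, z k ∈ (⊥ : Subring K)) (heven : Even (∑ k ∈ F, p k)) :
    ∃ m : ℤ, ∑ k, (p k : K) * z k = m := by
  classical
  obtain ⟨a, ha⟩ := heven
  have hF : ∑ k ∈ F, (p k : K) * z k = a := by
    rw [sum_congr rfl fun k hk => by rw [hhalf k hk], ← sum_mul]
    have hcast : ((∑ k ∈ F, p k : ℤ) : K) * (1 / 2) = a := by rw [ha]; push_cast; ring
    exact_mod_cast hcast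
  have hsum : ∑ k, (p k : K) * z k ∈ (⊥ : Subring K) := by
    rw [← sum_add_sum_compl F, hF]
    refine add_mem (intCast_mem _ a) (sum_mem fun k hk => mul_mem (intCast_mem _ _) ?_)
    exact hint k (mem_compl.mp hk)
  obtain ⟨m, hm⟩ := Subring.mem_bot.mp hsum
  exact ⟨m, hm.symm⟩

theorem stmt_10_general (t n : ℕ) (x : Fin n → ℝ)
    (hhalf : ∀ i, x i = 0 ∨ x i = 1 / 2 ∨ x i = 1)
    (π : Fin t → Fin n → ℤ) :
    ∃ J : Finset (Fin n), (∀ j ∈ J, x j = 1 / 2) ∧ J.card ≤ t ∧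
      ∀ i : Fin t,
        (∃ m : ℤ, ∑ k, (π i k : ℝ) * (if k ∈ J then (0 : ℝ) else x k) = (m : ℝ)) ∧
        (∃ m : ℤ, ∑ k, (π i k : ℝ) * (if k ∈ J then (1 : ℝ) else x k) = (m : ℝ)) := by
  set E : Finset (Fin n) := {k | x k = 1 / 2}
  obtain ⟨J, hJE, hindep, hcolumns⟩ :=
    exists_linearIndepOn_subset_sum_sdiff_eq_zero (fun k i => (π i k : ZMod 2)) E
  have hJhalf : ∀ j ∈ J, x j = 1 / 2 := fun j hj => (mem_filter.mp (hJE hj)).2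
  have hcard : J.card ≤ t := by
    simpa using hindep.linearIndependent.fintype_card_le_finrank
  have hround : ∀ c ∈ (⊥ : Subring ℝ), ∀ i,
      ∃ m : ℤ, ∑ k, (π i k : ℝ) * (if k ∈ J then c else x k) = m := by
    intro c hc i
    refine exists_int_sum_mul_eq_of_even (π i) _ (E \ J) (fun k hk => ?_) (fun k hk => ?_) ?_
    · obtain ⟨hkE, hkJ⟩ := mem_sdiff.mp hk
      simpa [hkJ] using (mem_filter.mp hkE).2
    · by_cases hkJ : k ∈ J
      · simpa [hkJ] using hc
      · have hkE : x k ≠ 1 / 2 := fun h =>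
          hk (mem_sdiff.mpr ⟨mem_filter.mpr ⟨mem_univ k, h⟩, hkJ⟩)
        rcases hhalf k with h | h | h
        · simp [hkJ, h]
        · exact absurd h hkE
        · simp [hkJ, h]
    · rw [← ZMod.intCast_eq_zero_iff_even]
      simpa using congrFun hcolumns i
  exact ⟨J, hJhalf, hcard, fun i => ⟨hround 0 (zero_mem _) i, hround 1 (one_mem _) i⟩⟩

theorem stmt_10 (t n : ℕ) (ht : 1 ≤ t) (x : Fin n → ℝ)
    (hhalf : ∀ i, x i = 0 ∨ x i = 1 / 2 ∨ x i = 1)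
    (hfrac : t ≤ (Finset.univ.filter fun i => x i = 1 / 2).card)
    (π : Fin t → Fin n → ℤ) :
    ∃ J : Finset (Fin n), (∀ j ∈ J, x j = 1 / 2) ∧ J.card ≤ t ∧
      ∀ i : Fin t,
        (∃ m : ℤ, ∑ k, (π i k : ℝ) * (if k ∈ J then (0 : ℝ) else x k) = (m : ℝ)) ∧
        (∃ m : ℤ, ∑ k, (π i k : ℝ) * (if k ∈ J then (1 : ℝ) else x k) = (m : ℝ)) :=
  stmt_10_general t n x hhalf π
end

section
/- Let t ≥ 1, let P ⊆ [0,1]^n be a polytope, and let x ∈ {0,1/2,1}^n with |E(x)| ≥ t. Suppose that for every J ⊆ E(x) with |J| ≤ t, both x^(J,0) and x^(J,1) lie in P. Then x lies in the t-dimensional lattice closure tLC(P). -/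
/-- The `t`-dimensional lattice closure of a set `P ⊆ ℝⁿ`. -/
def tDimLatticeClosure (t n : ℕ) (P : Set (Fin n → ℝ)) : Set (Fin n → ℝ) :=
  ⋂ (π : Fin t → Fin n → ℤ),
    convexHull ℝ (⋂ j : Fin t, {x ∈ P | ∃ m : ℤ, ∑ i, (π j i : ℝ) * x i = (m : ℝ)})

/-!
Fix `π¹, …, πᵗ ∈ ℤⁿ`. Over `𝔽₂`, the `|E(x)|` parity vectors `(πʲᵢ mod 2)ⱼ ∈ 𝔽₂ᵗ`, `i ∈ E(x)`,
have a subfamily indexed by some `J ⊆ E(x)` with `|J| ≤ t` and the same sum: shrink any subfamily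
with more than `t` members by a nonempty dependent subset, which sums to zero. Then every
`∑_{i ∈ E(x) \ J} πʲᵢ` is even, so the two roundings `x^(J,0)`, `x^(J,1)`, which lie in `P` and
whose half-integral coordinates are exactly `E(x) \ J`, satisfy `⟨πʲ, ·⟩ ∈ ℤ`. Their midpoint is `x`.
-/

open Finset

section ZModTwo

variable {ι V : Type*} [AddCommGroup V] [Module (ZMod 2) V] [Module.Finite (ZMod 2) V]

theorem exists_nonempty_subset_sum_eq_zero_of_finrank_lt (v : ι → V) {J : Finset ι}
    (hJ : Module.finrank (ZMod 2) V < #J) : ∃ K ⊆ J, K.Nonempty ∧ ∑ i ∈ K, v i = 0 := by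
  classical
  have hdep : ¬LinearIndependent (ZMod 2) fun i : J => v i := fun h => by
    have := h.fintype_card_le_finrank
    rw [Fintype.card_coe] at this
    omega
  obtain ⟨g, hg, i₀, hi₀⟩ := Fintype.not_linearIndependent_iff.1 hdep
  have hg_one : ∀ i, g i ≠ 0 → g i = 1 := fun i => by generalize g i = a; revert a; decide
  refine ⟨(univ.filter fun i => g i ≠ 0).map (Function.Embedding.subtype _),
    fun i hi => ?_, ⟨i₀, by simp [hi₀]⟩, ?_⟩
  · obtain ⟨a, -, rfl⟩ := mem_map.1 hi
    exact a.2
  · calc ∑ i ∈ (univ.filter fun i => g i ≠ 0).map (Function.Embedding.subtype _), v i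
        = ∑ i ∈ univ.filter fun i => g i ≠ 0, g i • v i := by
          rw [sum_map]
          exact sum_congr rfl fun i hi => by rw [hg_one i (mem_filter.1 hi).2, one_smul]; rfl
      _ = 0 := by
          rw [sum_filter_of_ne (p := fun i => g i ≠ 0) fun i _ h hgi => h (by rw [hgi, zero_smul])]
          exact hg

theorem exists_subset_card_le_finrank_sum_eq (v : ι → V) (E : Finset ι) :
    ∃ J ⊆ E, #J ≤ Module.finrank (ZMod 2) V ∧ ∑ i ∈ J, v i = ∑ i ∈ E, v i := by
  classical
  induction E using Finset.strongInduction with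
  | H S ih =>
    by_cases hS : #S ≤ Module.finrank (ZMod 2) V
    · exact ⟨S, subset_rfl, hS, rfl⟩
    obtain ⟨K, hKS, hK, hK0⟩ :=
      exists_nonempty_subset_sum_eq_zero_of_finrank_lt v (not_le.1 hS)
    obtain ⟨J, hJ, hJcard, hJsum⟩ := ih (S \ K) (sdiff_ssubset hKS hK)
    refine ⟨J, hJ.trans sdiff_subset, hJcard, ?_⟩
    rw [hJsum, sum_sdiff_eq_sub hKS, hK0, sub_zero]

end ZModTwo

theorem exists_subset_card_le_forall_two_dvd_sum_sdiff {ι : Type*} [DecidableEq ι] {t : ℕ}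
    (π : Fin t → ι → ℤ) (E : Finset ι) :
    ∃ J ⊆ E, #J ≤ t ∧ ∀ j, 2 ∣ ∑ i ∈ E \ J, π j i := by
  obtain ⟨J, hJE, hJt, hJsum⟩ :=
    exists_subset_card_le_finrank_sum_eq (fun i j => (π j i : ZMod 2)) E
  refine ⟨J, hJE, by simpa using hJt, fun j => ?_⟩
  have := congrFun (sum_sdiff_eq_sub hJE (f := fun i j => (π j i : ZMod 2))) j
  rw [hJsum, sub_self] at this
  exact_mod_cast (ZMod.intCast_zmod_eq_zero_iff_dvd _ 2).1 (by push_cast; simpa using this)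

theorem exists_int_sum_mul_eq_of_two_dvd {ι : Type*} [Fintype ι] (π : ι → ℤ) (y : ι → ℝ)
    (hy : ∀ i, y i = 0 ∨ y i = 1 / 2 ∨ y i = 1)
    (heven : 2 ∣ ∑ i ∈ univ.filter fun i => y i = 1 / 2, π i) :
    ∃ m : ℤ, ∑ i, (π i : ℝ) * y i = m := by
  obtain ⟨k, hk⟩ := heven
  refine ⟨k + ∑ i ∈ univ.filter fun i => y i = 1, π i, ?_⟩
  have hsplit : ∀ i, (π i : ℝ) * y i
      = (if y i = 1 / 2 then (π i : ℝ) / 2 else 0) + (if y i = 1 then (π i : ℝ) else 0) := by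
    intro i
    rcases hy i with h | h | h
    · simp [h]
    · norm_num [h]
      ring
    · norm_num [h]
  have hk' : ∑ i ∈ univ.filter (fun i => y i = 1 / 2), (π i : ℝ) = 2 * k := by exact_mod_cast hk
  rw [sum_congr rfl fun i _ => hsplit i, sum_add_distrib, ← sum_filter, ← sum_filter,
    ← sum_div, hk']
  push_cast
  ring

section Rounding

variable {ι : Type*} [DecidableEq ι]

theorem filter_piecewise_eq_half [Fintype ι] (x : ι → ℝ) (J : Finset ι) {c : ℝ} (hc : c ≠ 1 / 2) :
    univ.filter (fun i => J.piecewise (fun _ => c) x i = 1 / 2)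
      = univ.filter (fun i => x i = 1 / 2) \ J := by
  ext i
  by_cases hi : i ∈ J
  · simpa [hi] using hc
  · simp [hi]

theorem exists_int_sum_mul_piecewise_eq [Fintype ι] (π : ι → ℤ) (x : ι → ℝ)
    (hx : ∀ i, x i = 0 ∨ x i = 1 / 2 ∨ x i = 1) (J : Finset ι)
    (heven : 2 ∣ ∑ i ∈ univ.filter (fun i => x i = 1 / 2) \ J, π i) {c : ℝ} (hc : c = 0 ∨ c = 1) :
    ∃ m : ℤ, ∑ i, (π i : ℝ) * J.piecewise (fun _ => c) x i = m := by
  have hc_half : c ≠ 1 / 2 := by rcases hc with rfl | rfl <;> norm_num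
  refine exists_int_sum_mul_eq_of_two_dvd π _ (fun i => ?_) ?_
  · by_cases hi : i ∈ J
    · rcases hc with hc | hc <;> simp [hi, hc]
    · simpa [hi] using hx i
  · rwa [filter_piecewise_eq_half x J hc_half]

theorem midpoint_piecewise_zero_piecewise_one (x : ι → ℝ) {J : Finset ι}
    (hJ : ∀ i ∈ J, x i = 1 / 2) :
    midpoint ℝ (J.piecewise (fun _ => 0) x) (J.piecewise (fun _ => 1) x) = x := by
  ext i
  rw [midpoint_eq_smul_add]
  by_cases hi : i ∈ J
  · simp only [Pi.smul_apply, Pi.add_apply, piecewise_eq_of_mem _ _ _ hi, hJ i hi]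
    norm_num
  · simp only [Pi.smul_apply, Pi.add_apply, piecewise_eq_of_notMem _ _ _ hi, smul_eq_mul]
    norm_num
    ring

end Rounding

theorem stmt_11_general (t n : ℕ) (P : Set (Fin n → ℝ))
    (x : Fin n → ℝ) (hhalf : ∀ i, x i = 0 ∨ x i = 1 / 2 ∨ x i = 1)
    (hround : ∀ J : Finset (Fin n), (∀ j ∈ J, x j = 1 / 2) → J.card ≤ t →
      (fun i => if i ∈ J then (0 : ℝ) else x i) ∈ P ∧
      (fun i => if i ∈ J then (1 : ℝ) else x i) ∈ P) :
    x ∈ tDimLatticeClosure t n P := by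
  refine Set.mem_iInter.2 fun π => ?_
  obtain ⟨J, hJE, hJt, heven⟩ :=
    exists_subset_card_le_forall_two_dvd_sum_sdiff π (univ.filter fun i => x i = 1 / 2)
  have hJ : ∀ i ∈ J, x i = 1 / 2 := fun i hi => (mem_filter.1 (hJE hi)).2
  have hmem : ∀ c : ℝ, c = 0 ∨ c = 1 → J.piecewise (fun _ => c) x ∈ P →
      J.piecewise (fun _ => c) x ∈
        ⋂ j, {y ∈ P | ∃ m : ℤ, ∑ i, (π j i : ℝ) * y i = m} := fun c hc hP =>
    Set.mem_iInter.2 fun j => ⟨hP, exists_int_sum_mul_piecewise_eq _ x hhalf J (heven j) hc⟩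
  rw [← midpoint_piecewise_zero_piecewise_one x hJ]
  exact segment_subset_convexHull (hmem 0 (.inl rfl) (hround J hJ hJt).1)
    (hmem 1 (.inr rfl) (hround J hJ hJt).2) (midpoint_mem_segment _ _)

theorem stmt_11 (t n : ℕ) (ht : 1 ≤ t) (P : Set (Fin n → ℝ))
    (hconv : Convex ℝ P)
    (hcube : P ⊆ Set.Icc (fun _ => (0 : ℝ)) (fun _ => (1 : ℝ)))
    (x : Fin n → ℝ) (hhalf : ∀ i, x i = 0 ∨ x i = 1 / 2 ∨ x i = 1)
    (hfrac : t ≤ (Finset.univ.filter fun i => x i = 1 / 2).card)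
    (hround : ∀ J : Finset (Fin n), (∀ j ∈ J, x j = 1 / 2) → J.card ≤ t →
      (fun i => if i ∈ J then (0 : ℝ) else x i) ∈ P ∧
      (fun i => if i ∈ J then (1 : ℝ) else x i) ∈ P) :
    x ∈ tDimLatticeClosure t n P :=
  stmt_11_general t n P x hhalf hround
end

section
/- Let G = (V,E) be a graph and x ∈ {0,1/2,1}^E a half-integral point. Suppose (i) every vertex incident to at least one 1/2-edge is incident to at least two 1/2-edges, and (ii) every vertex incident to no 1/2-edge is incident to an odd number of 1-edges. Then x belongs to the Tseitin polytope P_TS(G). -/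
/-!
Write the left-hand side of a Tseitin inequality at `u` as `∑ v ∈ N(u), x'_{uv}`, where `x'` is `x`
with the coordinates in `F` flipped to `1 - x`; all terms of this sum are nonnegative. A
`1/2`-coordinate stays `1/2` under flipping, so a vertex with two `1/2`-edges already gets
`1/2 + 1/2`. At a vertex with only integral edges every flipped term is `0` or `1`, and all of
them vanish only if `F` is exactly the set of `1`-edges at `u`, which is impossible because that
set is odd and `F` is even.
-/

/-- The Tseitin polytope of a graph `G`, with variables indexed by unordered pairs. -/
def TseitinPolytope {V : Type*} [Fintype V] [DecidableEq V] (G : SimpleGraph V)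
    [DecidableRel G.Adj] : Set (Sym2 V → ℝ) :=
  {x | (∀ e, 0 ≤ x e ∧ x e ≤ 1) ∧
    ∀ u : V, ∀ F ⊆ G.neighborFinset u, Even F.card →
      1 ≤ ∑ v ∈ G.neighborFinset u \ F, x s(u, v) + ∑ v ∈ F, (1 - x s(u, v))}

open Finset

def flipOn {ι : Type*} [DecidableEq ι] (F : Finset ι) (y : ι → ℝ) (i : ι) : ℝ :=
  if i ∈ F then 1 - y i else y i

section FlipOn

variable {ι : Type*} [DecidableEq ι] {F N : Finset ι} {y : ι → ℝ}

theorem sum_sdiff_add_sum_one_sub_eq_sum_flipOn (hF : F ⊆ N) :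
    ∑ i ∈ N \ F, y i + ∑ i ∈ F, (1 - y i) = ∑ i ∈ N, flipOn F y i := by
  simp only [flipOn]
  rw [sum_ite, filter_mem_eq_inter, inter_eq_right.mpr hF, filter_notMem_eq_sdiff,
    add_comm]

theorem flipOn_nonneg {i : ι} (h0 : 0 ≤ y i) (h1 : y i ≤ 1) : 0 ≤ flipOn F y i := by
  unfold flipOn
  split_ifs <;> linarith

theorem flipOn_of_eq_half {i : ι} (h : y i = 1 / 2) : flipOn F y i = 1 / 2 := by
  unfold flipOn
  split_ifs <;> linarith

theorem one_le_sum_flipOn_of_two_le_card_half (hy : ∀ i ∈ N, 0 ≤ y i ∧ y i ≤ 1)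
    (hhalf : 2 ≤ (N.filter (y · = 1 / 2)).card) : 1 ≤ ∑ i ∈ N, flipOn F y i :=
  calc (1 : ℝ) ≤ (N.filter (y · = 1 / 2)).card * (1 / 2) := by
        have : (2 : ℝ) ≤ (N.filter (y · = 1 / 2)).card := by exact_mod_cast hhalf
        linarith
    _ = ∑ i ∈ N.filter (y · = 1 / 2), flipOn F y i := by
        rw [sum_congr rfl fun i hi => flipOn_of_eq_half (mem_filter.mp hi).2, sum_const,
          nsmul_eq_mul]
    _ ≤ ∑ i ∈ N, flipOn F y i :=
        sum_le_sum_of_subset_of_nonneg (filter_subset _ _) fun i hi _ =>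
          flipOn_nonneg (hy i hi).1 (hy i hi).2

theorem exists_flipOn_eq_one (hy : ∀ i ∈ N, y i = 0 ∨ y i = 1) (hF : F ⊆ N)
    (hne : N.filter (y · = 1) ≠ F) : ∃ i ∈ N, flipOn F y i = 1 := by
  obtain ⟨i, hi⟩ : ∃ i, ¬(i ∈ N.filter (y · = 1) ↔ i ∈ F) := by
    by_contra! h
    exact hne (ext h)
  have hiN : i ∈ N := by
    by_contra hiN
    exact hi ⟨fun h => absurd (mem_filter.mp h).1 hiN, fun h => absurd (hF h) hiN⟩
  refine ⟨i, hiN, ?_⟩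
  rcases hy i hiN with h | h <;> simp_all [flipOn]

theorem one_le_sum_flipOn_of_odd (hy : ∀ i ∈ N, y i = 0 ∨ y i = 1) (hF : F ⊆ N)
    (hodd : Odd (N.filter (y · = 1)).card) (hFeven : Even F.card) :
    1 ≤ ∑ i ∈ N, flipOn F y i := by
  have hne : N.filter (y · = 1) ≠ F := fun h =>
    Nat.not_even_iff_odd.mpr hodd (h ▸ hFeven)
  obtain ⟨i, hiN, hi⟩ := exists_flipOn_eq_one hy hF hne
  have hy01 : ∀ i ∈ N, 0 ≤ y i ∧ y i ≤ 1 := fun i hi => by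
    rcases hy i hi with h | h <;> norm_num [h]
  calc (1 : ℝ) = flipOn F y i := hi.symm
    _ ≤ ∑ i ∈ N, flipOn F y i :=
        single_le_sum (fun j hj => flipOn_nonneg (hy01 j hj).1 (hy01 j hj).2) hiN

end FlipOn

theorem stmt_16 {V : Type*} [Fintype V] [DecidableEq V] (G : SimpleGraph V)
    [DecidableRel G.Adj] (x : Sym2 V → ℝ)
    (hhalf : ∀ e, x e = 0 ∨ x e = 1 / 2 ∨ x e = 1)
    (h1 : ∀ u : V, (∃ v ∈ G.neighborFinset u, x s(u, v) = 1 / 2) →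
      2 ≤ ((G.neighborFinset u).filter fun v => x s(u, v) = 1 / 2).card)
    (h2 : ∀ u : V, (∀ v ∈ G.neighborFinset u, x s(u, v) ≠ 1 / 2) →
      Odd ((G.neighborFinset u).filter fun v => x s(u, v) = 1).card) :
    x ∈ TseitinPolytope G := by
  have hbounds : ∀ e, 0 ≤ x e ∧ x e ≤ 1 := fun e => by
    rcases hhalf e with h | h | h <;> norm_num [h]
  refine ⟨hbounds, fun u F hF hFeven => ?_⟩
  rw [sum_sdiff_add_sum_one_sub_eq_sum_flipOn hF]
  by_cases hu : ∃ v ∈ G.neighborFinset u, x s(u, v) = 1 / 2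
  · exact one_le_sum_flipOn_of_two_le_card_half (fun v _ => hbounds _) (h1 u hu)
  · push Not at hu
    have hint : ∀ v ∈ G.neighborFinset u, x s(u, v) = 0 ∨ x s(u, v) = 1 := fun v hv => by
      rcases hhalf s(u, v) with h | h | h
      exacts [.inl h, absurd h (hu v hv), .inr h]
    exact one_le_sum_flipOn_of_odd hint hF (h2 u hu) hFeven
end

section
/- Let G = (V,E) be a graph and U ⊆ V with |U| ≤ |V|/2. Assume that for every nonempty X ⊆ U, the number of edges between X and V∖X is positive. Then for every b ∈ {0,1}^U the system of parity equations ∑_{v ∈ N(u)} x_{uv} ≡ b_u (mod 2), for all u ∈ U, has a solution x ∈ {0,1}^E. -/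
/-!
Induct on `U`. Applying the hypothesis to `X = U` itself gives `u ∈ U` with a neighbour `v ∉ U`.
Solve the system for `U.erase u`, then add the defect `b u - ∑ …` at `u` to the value on the
edge `s(u, v)`: this fixes the equation at `u`, and no other equation of the system sees that
edge because its other endpoint `v` lies outside `U`.
-/

namespace SimpleGraph

variable {V R : Type*} [DecidableEq V] [AddCommGroup R] (G : SimpleGraph V) [G.LocallyFinite]

lemma sum_neighborFinset_add_single_self {u v : V} (huv : G.Adj u v) (x : Sym2 V → R) (c : R) :
    ∑ w ∈ G.neighborFinset u, (x + Pi.single s(u, v) c : Sym2 V → R) s(u, w) =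
      ∑ w ∈ G.neighborFinset u, x s(u, w) + c := by
  have hv : v ∈ G.neighborFinset u := (G.mem_neighborFinset u v).2 huv
  simp only [Pi.add_apply, Finset.sum_add_distrib, add_right_inj]
  rw [Finset.sum_eq_single_of_mem v hv fun w _ hwv => ?_, Pi.single_eq_same]
  exact Pi.single_eq_of_ne (Sym2.congr_right.not.2 hwv) _

lemma sum_neighborFinset_add_single_of_ne {u v w : V} (hwu : w ≠ u) (hwv : w ≠ v)
    (x : Sym2 V → R) (c : R) :
    ∑ t ∈ G.neighborFinset w, (x + Pi.single s(u, v) c : Sym2 V → R) s(w, t) =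
      ∑ t ∈ G.neighborFinset w, x s(w, t) := by
  refine Finset.sum_congr rfl fun t _ => ?_
  have hne : s(w, t) ≠ s(u, v) := by
    rintro h
    rcases Sym2.eq_iff.1 h with ⟨rfl, -⟩ | ⟨rfl, -⟩
    exacts [hwu rfl, hwv rfl]
  rw [Pi.add_apply, Pi.single_eq_of_ne hne, add_zero]

theorem exists_sum_neighborFinset_eq (U : Finset V)
    (hexp : ∀ X ⊆ U, X.Nonempty → ∃ u ∈ X, ∃ v ∉ X, G.Adj u v) (b : V → R) :
    ∃ x : Sym2 V → R, ∀ u ∈ U, ∑ v ∈ G.neighborFinset u, x s(u, v) = b u := by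
  induction U using Finset.strongInduction with
  | _ U ih =>
    rcases U.eq_empty_or_nonempty with rfl | hne
    · exact ⟨0, by simp⟩
    obtain ⟨u, hu, v, hv, huv⟩ := hexp U le_rfl hne
    obtain ⟨x, hx⟩ := ih (U.erase u) (Finset.erase_ssubset hu)
      fun X hX => hexp X (hX.trans (Finset.erase_subset u U))
    refine ⟨x + Pi.single s(u, v) (b u - ∑ w ∈ G.neighborFinset u, x s(u, w)), fun w hw => ?_⟩
    by_cases hwu : w = u
    · subst hwu
      rw [G.sum_neighborFinset_add_single_self huv, add_sub_cancel]
    · rw [G.sum_neighborFinset_add_single_of_ne hwu (ne_of_mem_of_not_mem hw hv)]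
      exact hx w (Finset.mem_erase.2 ⟨hwu, hw⟩)

end SimpleGraph

theorem stmt_17_general {V : Type*} [Fintype V] [DecidableEq V] (G : SimpleGraph V)
    [DecidableRel G.Adj] (U : Finset V)
    (hexp : ∀ X ⊆ U, X.Nonempty → ∃ u ∈ X, ∃ v ∉ X, G.Adj u v)
    (b : V → ZMod 2) :
    ∃ x : Sym2 V → ZMod 2, ∀ u ∈ U, ∑ v ∈ G.neighborFinset u, x s(u, v) = b u :=
  G.exists_sum_neighborFinset_eq U hexp b

theorem stmt_17 {V : Type*} [Fintype V] [DecidableEq V] (G : SimpleGraph V)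
    [DecidableRel G.Adj] (U : Finset V) (hU : 2 * U.card ≤ Fintype.card V)
    (hexp : ∀ X ⊆ U, X.Nonempty → ∃ u ∈ X, ∃ v ∉ X, G.Adj u v)
    (b : V → ZMod 2) :
    ∃ x : Sym2 V → ZMod 2, ∀ u ∈ U, ∑ v ∈ G.neighborFinset u, x s(u, v) = b u :=
  stmt_17_general G U hexp b
end

section
/- Let P ⊆ [0,1]^n be a polytope and let x̄ ∈ {0,1/2,1}^n have at least one fractional coordinate. Suppose that for every fractional coordinate i of x̄, both x̄^(i,0) and x̄^(i,1) (obtained by setting coordinate i to 0 and 1 respectively) lie in P. Then for every valid inequality ⟨π, x⟩ ≤ π₀ for P with π ∈ ℤ^n, π₀ ∈ ℤ, the point x̄ lies in conv({x ∈ {0,1}^n : ⟨π, x⟩ ≤ π₀}). -/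
/-!
Validity of the inequality at the two roundings of a fractional coordinate `i` of `x̄` gives
`|π i| ≤ 2 (π₀ - ⟨π, x̄⟩)`. Signs `ε i = ±1` can be chosen greedily so that the signed sum
`∑ ε i π i` over the fractional coordinates stays within the same bound. Rounding each fractional
coordinate to `(1 + ε i) / 2`, respectively `(1 - ε i) / 2`, gives two `0/1` points whose midpoint
is `x̄` and whose values of `⟨π, ·⟩` are `⟨π, x̄⟩ ± (∑ ε i π i) / 2 ≤ π₀`.
-/

open Finset Matrix

section

variable {R : Type*} [CommRing R] [LinearOrder R] [IsStrictOrderedRing R]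

lemma abs_add_le_or_abs_sub_le {a b C : R} (ha : |a| ≤ C) (hb : |b| ≤ C) :
    |a + b| ≤ C ∨ |a - b| ≤ C := by
  rw [abs_le] at ha hb
  rcases le_total 0 (a * b) with h | h
  · right; rw [abs_le]; constructor <;> nlinarith
  · left; rw [abs_le]; constructor <;> nlinarith

lemma exists_sign_abs_sum_le {ι : Type*} [DecidableEq ι] (s : Finset ι) (f : ι → R) {C : R}
    (hC : 0 ≤ C) (hf : ∀ i ∈ s, |f i| ≤ C) :
    ∃ ε : ι → R, (∀ i, ε i = 1 ∨ ε i = -1) ∧ |∑ i ∈ s, ε i * f i| ≤ C := by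
  induction s using Finset.induction_on with
  | empty => exact ⟨fun _ => 1, fun _ => Or.inl rfl, by simpa using hC⟩
  | @insert a s ha ih =>
    obtain ⟨ε, hε, hsum⟩ := ih fun i hi => hf i (mem_insert_of_mem hi)
    have hsign : ∃ σ : R, (σ = 1 ∨ σ = -1) ∧ |∑ i ∈ s, ε i * f i + σ * f a| ≤ C := by
      rcases abs_add_le_or_abs_sub_le hsum (hf a (mem_insert_self a s)) with h | h
      · exact ⟨1, Or.inl rfl, by simpa using h⟩
      · exact ⟨-1, Or.inr rfl, by simpa [← sub_eq_add_neg] using h⟩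
    obtain ⟨σ, hσ, hle⟩ := hsign
    refine ⟨Function.update ε a σ, fun i => ?_, ?_⟩
    · rcases eq_or_ne i a with rfl | hi
      · simpa using hσ
      · simpa [hi] using hε i
    · rwa [sum_insert ha, Function.update_self, add_comm,
        sum_congr rfl fun i hi => by rw [Function.update_of_ne (ne_of_mem_of_not_mem hi ha)]]

end

section

variable {ι : Type*}

lemma dotProduct_ite_eq [Fintype ι] [DecidableEq ι] (w x : ι → ℝ) (i : ι) (c : ℝ) :
    w ⬝ᵥ (fun j => if j = i then c else x j) = w ⬝ᵥ x + w i * (c - x i) := by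
  have : (fun j => if j = i then c else x j) = x + Pi.single i (c - x i) := by
    ext j; rcases eq_or_ne j i with rfl | h <;> simp [*]
  rw [this, dotProduct_add, dotProduct_single]

noncomputable def roundHalf (x ε : ι → ℝ) : ι → ℝ :=
  fun j => if x j = 1 / 2 then (1 + ε j) / 2 else x j

lemma roundHalf_eq_zero_or_one {x ε : ι → ℝ} (hx : ∀ i, x i = 0 ∨ x i = 1 / 2 ∨ x i = 1)
    (hε : ∀ i, ε i = 1 ∨ ε i = -1) (i : ι) : roundHalf x ε i = 0 ∨ roundHalf x ε i = 1 := by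
  unfold roundHalf
  split_ifs with h
  · rcases hε i with h' | h' <;> norm_num [h']
  · rcases hx i with h' | h' | h' <;> simp_all

lemma dotProduct_roundHalf [Fintype ι] (w x ε : ι → ℝ) :
    w ⬝ᵥ roundHalf x ε = w ⬝ᵥ x + (∑ j with x j = 1 / 2, ε j * w j) / 2 := by
  rw [sum_filter, sum_div, dotProduct, dotProduct, ← sum_add_distrib]
  refine sum_congr rfl fun j _ => ?_
  unfold roundHalf
  split_ifs with h
  · rw [h]; ring
  · ring

lemma midpoint_roundHalf_neg (x ε : ι → ℝ) :
    (1 / 2 : ℝ) • roundHalf x ε + (1 / 2 : ℝ) • roundHalf x (-ε) = x := by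
  ext j
  simp only [Pi.add_apply, Pi.smul_apply, Pi.neg_apply, smul_eq_mul, roundHalf]
  split_ifs with h
  · rw [h]; ring
  · ring

theorem mem_convexHull_zero_one_of_half [Fintype ι] {x w : ι → ℝ} {b : ℝ}
    (hx : ∀ i, x i = 0 ∨ x i = 1 / 2 ∨ x i = 1) (hb : w ⬝ᵥ x ≤ b)
    (hw : ∀ i, x i = 1 / 2 → |w i| ≤ 2 * (b - w ⬝ᵥ x)) :
    x ∈ convexHull ℝ {y : ι → ℝ | (∀ i, y i = 0 ∨ y i = 1) ∧ w ⬝ᵥ y ≤ b} := by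
  classical
  obtain ⟨ε, hε, hsum⟩ := exists_sign_abs_sum_le {j | x j = 1 / 2} w (by linarith)
    fun i hi => hw i (mem_filter.1 hi).2
  have hε' : ∀ i, (-ε) i = 1 ∨ (-ε) i = -1 := fun i => by
    rcases hε i with h | h <;> simp [h]
  rw [abs_le] at hsum
  have hu : roundHalf x ε ∈ {y : ι → ℝ | (∀ i, y i = 0 ∨ y i = 1) ∧ w ⬝ᵥ y ≤ b} := by
    refine ⟨roundHalf_eq_zero_or_one hx hε, ?_⟩
    rw [dotProduct_roundHalf]
    linarith
  have hv : roundHalf x (-ε) ∈ {y : ι → ℝ | (∀ i, y i = 0 ∨ y i = 1) ∧ w ⬝ᵥ y ≤ b} := by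
    refine ⟨roundHalf_eq_zero_or_one hx hε', ?_⟩
    rw [dotProduct_roundHalf]
    simp only [Pi.neg_apply, neg_mul, sum_neg_distrib]
    linarith
  rw [← midpoint_roundHalf_neg x ε]
  exact convex_convexHull ℝ _ (subset_convexHull ℝ _ hu) (subset_convexHull ℝ _ hv)
    (by norm_num) (by norm_num) (by norm_num)

end

theorem stmt_18_general (n : ℕ) (P : Set (Fin n → ℝ))
    (x : Fin n → ℝ) (hhalf : ∀ i, x i = 0 ∨ x i = 1 / 2 ∨ x i = 1)
    (hfrac : ∃ i, x i = 1 / 2)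
    (hround : ∀ i, x i = 1 / 2 →
      (fun j => if j = i then (0 : ℝ) else x j) ∈ P ∧
      (fun j => if j = i then (1 : ℝ) else x j) ∈ P)
    (π : Fin n → ℤ) (π₀ : ℤ) (hvalid : ∀ y ∈ P, ∑ i, (π i : ℝ) * y i ≤ (π₀ : ℝ)) :
    x ∈ convexHull ℝ
      {y : Fin n → ℝ | (∀ i, y i = 0 ∨ y i = 1) ∧ ∑ i, (π i : ℝ) * y i ≤ (π₀ : ℝ)} := by
  set w : Fin n → ℝ := fun i => π i
  have hπ_le : ∀ i, x i = 1 / 2 → |w i| ≤ 2 * (π₀ - w ⬝ᵥ x) := by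
    intro i hi
    have h0 := hvalid _ (hround i hi).1
    have h1 := hvalid _ (hround i hi).2
    change w ⬝ᵥ _ ≤ _ at h0 h1
    rw [dotProduct_ite_eq, hi] at h0 h1
    rw [abs_le]; constructor <;> linarith
  obtain ⟨i, hi⟩ := hfrac
  have hx_le : w ⬝ᵥ x ≤ π₀ := by
    have := (abs_nonneg _).trans (hπ_le i hi); linarith
  exact mem_convexHull_zero_one_of_half hhalf hx_le hπ_le

theorem stmt_18 (n : ℕ) (P : Set (Fin n → ℝ)) (hconv : Convex ℝ P)
    (hcube : P ⊆ Set.Icc (fun _ => (0 : ℝ)) (fun _ => (1 : ℝ)))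
    (x : Fin n → ℝ) (hhalf : ∀ i, x i = 0 ∨ x i = 1 / 2 ∨ x i = 1)
    (hfrac : ∃ i, x i = 1 / 2)
    (hround : ∀ i, x i = 1 / 2 →
      (fun j => if j = i then (0 : ℝ) else x j) ∈ P ∧
      (fun j => if j = i then (1 : ℝ) else x j) ∈ P)
    (π : Fin n → ℤ) (π₀ : ℤ) (hvalid : ∀ y ∈ P, ∑ i, (π i : ℝ) * y i ≤ (π₀ : ℝ)) :
    x ∈ convexHull ℝ
      {y : Fin n → ℝ | (∀ i, y i = 0 ∨ y i = 1) ∧ ∑ i, (π i : ℝ) * y i ≤ (π₀ : ℝ)} :=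
  stmt_18_general n P x hhalf hfrac hround π π₀ hvalid
end
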